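/- arXiv:1505.00770 — 2 statements merged into one kernel-verified Lean document; each statement's English description precedes it below -/
import Mathlib

section
/- Let Δ : M_n(ℂ) → M_n(ℂ) be a weak-2-local derivation and let p_1,...,p_n be mutually orthogonal minimal projections with associated matrix units e_{ij} (satisfying e_{ij}* e_{ij} = p_j, e_{ij} e_{ij}* = p_i). Then there exists w_0 ∈ M_n(ℂ) such that Δ(Σ_k λ_k p_k) = [w_0, Σ_k λ_k p_k] for all λ_1,...,λ_n ∈ ℂ, and Δ(e_{1j}) = [w_0, e_{1j}] for all 2 ≤ j ≤ n. -/
/-!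
Every derivation of `Mₙ(ℂ)` is inner; on a system of matrix units it is the commutator with
`∑ i, D (e i o) * e o i`. So for any two matrices and any functional, `Δ` agrees with a single
commutator `[w, ·]` at both. Write `φ i j x = tr (e j i * x)` for the coordinates. Pairing
`∑ λₖ eₖₖ` with `d = ∑ k • eₖₖ`, whose eigenvalues are distinct, shows that one matrix implements
`Δ` on the whole diagonal algebra, its off-diagonal entries being read off from `Δ d`. Pairing
`e o j₀` with `e o o` under `φ i j₀ + φ i o`, and with `e j₀ j₀` under `φ o j + φ j₀ j`, transfers
these entries to `Δ (e o j₀)`; the diagonal entries, still free, are chosen to match its `(o, j₀)`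
coefficient.
-/

open Matrix Finset

variable {n : ℕ}

/-- A linear derivation on `Mₙ(ℂ)`. -/
def IsMatrixDerivation (D : Matrix (Fin n) (Fin n) ℂ →ₗ[ℂ] Matrix (Fin n) (Fin n) ℂ) : Prop :=
  ∀ x y, D (x * y) = D x * y + x * D y

/-- A (non-necessarily linear) weak-2-local derivation on `Mₙ(ℂ)`. -/
def IsWeak2LocalDerivation (Δ : Matrix (Fin n) (Fin n) ℂ → Matrix (Fin n) (Fin n) ℂ) : Prop :=
  ∀ a b : Matrix (Fin n) (Fin n) ℂ, ∀ φ : Matrix (Fin n) (Fin n) ℂ →ₗ[ℂ] ℂ,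
    ∃ D : Matrix (Fin n) (Fin n) ℂ →ₗ[ℂ] Matrix (Fin n) (Fin n) ℂ,
      IsMatrixDerivation D ∧ φ (Δ a) = φ (D a) ∧ φ (Δ b) = φ (D b)

/-- A system of matrix units in `Mₙ(ℂ)`: `e i j * e k l = δ_{jk} e i l`, `(e i j)* = e j i`,
and `∑ i, e i i = 1`.  The `p i := e i i` are then mutually orthogonal minimal projections and
`(e i j)* (e i j) = p j`, `(e i j)(e i j)* = p i`. -/
structure IsMatrixUnitSystem (e : Fin n → Fin n → Matrix (Fin n) (Fin n) ℂ) : Prop where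
  mul_eq : ∀ i j k l, e i j * e k l = (if j = k then (1 : ℂ) else 0) • e i l
  star_eq : ∀ i j, star (e i j) = e j i
  sum_diag : ∑ i, e i i = 1

noncomputable def matrixUnitCoord (e : Fin n → Fin n → Matrix (Fin n) (Fin n) ℂ) (i j : Fin n) :
    Matrix (Fin n) (Fin n) ℂ →ₗ[ℂ] ℂ :=
  Matrix.traceLinearMap (Fin n) ℂ ℂ ∘ₗ LinearMap.mulLeft ℂ (e j i)

lemma matrixUnitCoord_apply (e : Fin n → Fin n → Matrix (Fin n) (Fin n) ℂ) (i j : Fin n)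
    (x : Matrix (Fin n) (Fin n) ℂ) : matrixUnitCoord e i j x = (e j i * x).trace :=
  rfl

namespace IsMatrixUnitSystem

variable {e : Fin n → Fin n → Matrix (Fin n) (Fin n) ℂ} (he : IsMatrixUnitSystem e)
include he

lemma mul_same (i j k : Fin n) : e i j * e j k = e i k := by
  simp [he.mul_eq]

lemma mul_of_ne {j k : Fin n} (i l : Fin n) (h : j ≠ k) : e i j * e k l = 0 := by
  simp [he.mul_eq, h]

lemma trace_eq (i j : Fin n) : (e i j).trace = if i = j then 1 else 0 := by
  have trace_diag_eq (k : Fin n) : (e k k).trace = (e i i).trace := by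
    rw [← he.mul_same k i k, trace_mul_comm, he.mul_same]
  have hsum : (n : ℂ) * (e i i).trace = n := by
    simpa [trace_sum, trace_diag_eq] using congrArg trace he.sum_diag
  split_ifs with hij
  · subst hij
    exact (mul_eq_left₀ (Nat.cast_ne_zero.mpr (Fin.pos i).ne')).mp hsum
  · rw [← he.mul_same i i j, trace_mul_comm, he.mul_of_ne _ _ (Ne.symm hij), trace_zero]

lemma coord_unit (i j a b : Fin n) :
    matrixUnitCoord e i j (e a b) = if i = a ∧ j = b then 1 else 0 := by
  rw [matrixUnitCoord_apply, he.mul_eq, trace_smul, he.trace_eq]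
  by_cases hia : i = a <;> by_cases hjb : j = b <;> simp [hia, hjb]

lemma coord_mul_unit (i j a b : Fin n) (w : Matrix (Fin n) (Fin n) ℂ) :
    matrixUnitCoord e i j (w * e a b) = if j = b then matrixUnitCoord e i a w else 0 := by
  rw [matrixUnitCoord_apply, matrixUnitCoord_apply, ← mul_assoc, trace_mul_comm, ← mul_assoc,
    he.mul_eq]
  split_ifs <;> simp_all

lemma coord_unit_mul (i j a b : Fin n) (w : Matrix (Fin n) (Fin n) ℂ) :
    matrixUnitCoord e i j (e a b * w) = if i = a then matrixUnitCoord e b j w else 0 := by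
  rw [matrixUnitCoord_apply, matrixUnitCoord_apply, ← mul_assoc, he.mul_eq]
  split_ifs <;> simp_all

lemma linearIndependent : LinearIndependent ℂ fun p : Fin n × Fin n => e p.1 p.2 := by
  refine Fintype.linearIndependent_iff.mpr fun c hc p => ?_
  simpa [he.coord_unit, ← Prod.ext_iff] using congrArg (matrixUnitCoord e p.1 p.2) hc

noncomputable def basis : Module.Basis (Fin n × Fin n) ℂ (Matrix (Fin n) (Fin n) ℂ) :=
  basisOfLinearIndependentOfCardEqFinrank' _ he.linearIndependent (by simp [Module.finrank_matrix])

lemma coe_basis : ⇑he.basis = fun p => e p.1 p.2 :=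
  coe_basisOfLinearIndependentOfCardEqFinrank' ..

lemma basis_repr_apply (x : Matrix (Fin n) (Fin n) ℂ) (p : Fin n × Fin n) :
    he.basis.repr x p = matrixUnitCoord e p.1 p.2 x := by
  have : he.basis.coord p = matrixUnitCoord e p.1 p.2 := he.basis.ext fun q => by
    rw [Module.Basis.coord_apply, Module.Basis.repr_self, he.coe_basis, he.coord_unit,
      Finsupp.single_apply]
    simp only [Prod.ext_iff, eq_comm]
  exact LinearMap.congr_fun this x

lemma ext_coord {x y : Matrix (Fin n) (Fin n) ℂ}
    (h : ∀ i j, matrixUnitCoord e i j x = matrixUnitCoord e i j y) : x = y :=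
  he.basis.ext_elem fun p => by simpa only [he.basis_repr_apply] using h p.1 p.2

lemma exists_coord_eq (c : Fin n → Fin n → ℂ) :
    ∃ w, ∀ i j, matrixUnitCoord e i j w = c i j :=
  ⟨he.basis.equivFun.symm fun p => c p.1 p.2, fun i j => by
    rw [← he.basis_repr_apply _ (i, j), ← Module.Basis.equivFun_apply,
      LinearEquiv.apply_symm_apply]⟩

lemma coord_commutator_unit (i j a b : Fin n) (w : Matrix (Fin n) (Fin n) ℂ) :
    matrixUnitCoord e i j (w * e a b - e a b * w) =
      (if j = b then matrixUnitCoord e i a w else 0) -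
        if i = a then matrixUnitCoord e b j w else 0 := by
  rw [map_sub, he.coord_mul_unit, he.coord_unit_mul]

lemma coord_commutator_diag (i j : Fin n) (lam : Fin n → ℂ) (w : Matrix (Fin n) (Fin n) ℂ) :
    matrixUnitCoord e i j (w * (∑ k, lam k • e k k) - (∑ k, lam k • e k k) * w) =
      (lam j - lam i) * matrixUnitCoord e i j w := by
  simp only [Finset.mul_sum, Finset.sum_mul, mul_smul_comm, smul_mul_assoc, map_sub, map_sum,
    map_smul, he.coord_mul_unit, he.coord_unit_mul, smul_eq_mul, mul_ite, mul_zero,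
    Finset.sum_ite_eq, Finset.mem_univ, if_true]
  ring

lemma derivation_unit_eq_commutator
    {D : Matrix (Fin n) (Fin n) ℂ →ₗ[ℂ] Matrix (Fin n) (Fin n) ℂ} (hD : IsMatrixDerivation D)
    (o a b : Fin n) :
    D (e a b) = (∑ i, D (e i o) * e o i) * e a b - e a b * ∑ i, D (e i o) * e o i := by
  have leibniz (i : Fin n) :
      e a b * D (e i o) = (if b = i then D (e a o) else 0) - D (e a b) * e i o := by
    rw [eq_sub_iff_add_eq', ← hD, he.mul_eq, map_smul]
    split_ifs <;> simp
  have left : (∑ i, D (e i o) * e o i) * e a b = D (e a o) * e o b := by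
    simp [Finset.sum_mul, mul_assoc, he.mul_eq]
  have right : e a b * (∑ i, D (e i o) * e o i) = D (e a o) * e o b - D (e a b) := by
    calc e a b * (∑ i, D (e i o) * e o i) = ∑ i, e a b * D (e i o) * e o i := by
          simp only [Finset.mul_sum, mul_assoc]
      _ = ∑ i, ((if b = i then D (e a o) * e o i else 0) - D (e a b) * (e i o * e o i)) := by
          simp only [leibniz, sub_mul, ite_mul, zero_mul, mul_assoc]
      _ = D (e a o) * e o b - D (e a b) := by
          simp [Finset.sum_sub_distrib, ← Finset.mul_sum, he.mul_same, he.sum_diag]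
  rw [left, right, sub_sub_cancel]

end IsMatrixUnitSystem

lemma isMatrixUnitSystem_single : IsMatrixUnitSystem fun i j : Fin n => single i j (1 : ℂ) where
  mul_eq i j k l := by
    split_ifs with h
    · simp [h]
    · rw [zero_smul]
      exact Matrix.single_mul_single_of_ne 1 i j k h 1
  star_eq i j := by simp [star_eq_conjTranspose]
  sum_diag := sum_single_one

theorem IsMatrixDerivation.exists_eq_commutator
    {D : Matrix (Fin n) (Fin n) ℂ →ₗ[ℂ] Matrix (Fin n) (Fin n) ℂ} (hD : IsMatrixDerivation D) :
    ∃ w, ∀ x, D x = w * x - x * w := by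
  rcases isEmpty_or_nonempty (Fin n) with _ | ⟨⟨o⟩⟩
  · exact ⟨0, fun _ => Subsingleton.elim _ _⟩
  obtain ⟨w, hw⟩ : ∃ w, ∀ i j, D (single i j 1) = w * single i j 1 - single i j 1 * w :=
    ⟨_, isMatrixUnitSystem_single.derivation_unit_eq_commutator hD o⟩
  have hD_eq : D = LinearMap.mulLeft ℂ w - LinearMap.mulRight ℂ w :=
    Matrix.ext_linearMap ℂ fun i j => LinearMap.ext fun c => by
      have hc : single i j c = c • single i j (1 : ℂ) := by rw [smul_single, smul_eq_mul, mul_one]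
      simp only [LinearMap.comp_apply, singleLinearMap_apply, LinearMap.sub_apply,
        LinearMap.mulLeft_apply, LinearMap.mulRight_apply]
      rw [hc, map_smul, hw, smul_sub, mul_smul_comm, smul_mul_assoc]
  exact ⟨w, fun x => by simp [hD_eq]⟩

/-- Off-diagonal entries of an element implementing `Δ` at `∑ k, k • e k k` (the division by
`j - i` makes the diagonal entries `0`). -/
noncomputable def diagCoeff (Δ : Matrix (Fin n) (Fin n) ℂ → Matrix (Fin n) (Fin n) ℂ)
    (e : Fin n → Fin n → Matrix (Fin n) (Fin n) ℂ) (i j : Fin n) : ℂ :=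
  matrixUnitCoord e i j (Δ (∑ k : Fin n, (k : ℂ) • e k k)) / ((j : ℂ) - i)

namespace IsWeak2LocalDerivation

variable {Δ : Matrix (Fin n) (Fin n) ℂ → Matrix (Fin n) (Fin n) ℂ} (hΔ : IsWeak2LocalDerivation Δ)
include hΔ

lemma exists_commutator (a b : Matrix (Fin n) (Fin n) ℂ) (φ : Matrix (Fin n) (Fin n) ℂ →ₗ[ℂ] ℂ) :
    ∃ w, φ (Δ a) = φ (w * a - a * w) ∧ φ (Δ b) = φ (w * b - b * w) := by
  obtain ⟨D, hD, ha, hb⟩ := hΔ a b φ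
  obtain ⟨w, hw⟩ := hD.exists_eq_commutator
  exact ⟨w, by rw [ha, hw], by rw [hb, hw]⟩

lemma apply_eq_of_commutator {a b : Matrix (Fin n) (Fin n) ℂ} {φ : Matrix (Fin n) (Fin n) ℂ →ₗ[ℂ] ℂ}
    (h : ∀ w, φ (w * a - a * w) = φ (w * b - b * w)) : φ (Δ a) = φ (Δ b) := by
  obtain ⟨w, ha, hb⟩ := hΔ.exists_commutator a b φ
  rw [ha, hb, h]

lemma apply_eq_zero_of_commutator {a : Matrix (Fin n) (Fin n) ℂ}
    {φ : Matrix (Fin n) (Fin n) ℂ →ₗ[ℂ] ℂ} (h : ∀ w, φ (w * a - a * w) = 0) : φ (Δ a) = 0 := by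
  obtain ⟨w, ha, -⟩ := hΔ.exists_commutator a a φ
  rw [ha, h]

variable {e : Fin n → Fin n → Matrix (Fin n) (Fin n) ℂ} (he : IsMatrixUnitSystem e)
include he

lemma coord_apply_diag (lam : Fin n → ℂ) (i j : Fin n) :
    matrixUnitCoord e i j (Δ (∑ k, lam k • e k k)) = (lam j - lam i) * diagCoeff Δ e i j := by
  obtain ⟨w, hlam, hid⟩ := hΔ.exists_commutator (∑ k, lam k • e k k)
    (∑ k : Fin n, (k : ℂ) • e k k) (matrixUnitCoord e i j)
  rw [he.coord_commutator_diag] at hlam hid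
  rw [hlam, diagCoeff, hid]
  rcases eq_or_ne i j with rfl | hij
  · simp
  · have : (j : ℂ) - i ≠ 0 := sub_ne_zero.mpr (by exact_mod_cast Fin.val_injective.ne hij.symm)
    field_simp

lemma coord_apply_unit_of_ne {o j₀ i j : Fin n} (hi : i ≠ o) (hj : j ≠ j₀) :
    matrixUnitCoord e i j (Δ (e o j₀)) = 0 :=
  hΔ.apply_eq_zero_of_commutator fun w => by simp [he.coord_commutator_unit, hi, hj]

lemma coord_apply_unit_col {o j₀ i : Fin n} (hi : i ≠ o) (hj₀ : j₀ ≠ o) :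
    matrixUnitCoord e i j₀ (Δ (e o j₀)) = diagCoeff Δ e i o := by
  have key := hΔ.apply_eq_of_commutator (φ := matrixUnitCoord e i j₀ + matrixUnitCoord e i o)
    (a := e o j₀) (b := ∑ k, (Pi.single o 1 : Fin n → ℂ) k • e k k) fun w => by
      rw [LinearMap.add_apply, LinearMap.add_apply, he.coord_commutator_unit,
        he.coord_commutator_unit, he.coord_commutator_diag, he.coord_commutator_diag]
      simp [hi, hj₀.symm]
  rw [LinearMap.add_apply, LinearMap.add_apply, hΔ.coord_apply_unit_of_ne he hi hj₀.symm,
    hΔ.coord_apply_diag he, hΔ.coord_apply_diag he] at key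
  simpa [Pi.single_apply, hi, hj₀] using key

lemma coord_apply_unit_row {o j₀ j : Fin n} (hj : j ≠ j₀) (hj₀ : j₀ ≠ o) :
    matrixUnitCoord e o j (Δ (e o j₀)) = -diagCoeff Δ e j₀ j := by
  have key := hΔ.apply_eq_of_commutator (φ := matrixUnitCoord e o j + matrixUnitCoord e j₀ j)
    (a := e o j₀) (b := ∑ k, (Pi.single j₀ 1 : Fin n → ℂ) k • e k k) fun w => by
      rw [LinearMap.add_apply, LinearMap.add_apply, he.coord_commutator_unit,
        he.coord_commutator_unit, he.coord_commutator_diag, he.coord_commutator_diag]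
      simp [hj, hj₀]
  rw [LinearMap.add_apply, LinearMap.add_apply, hΔ.coord_apply_unit_of_ne he hj₀ hj,
    hΔ.coord_apply_diag he, hΔ.coord_apply_diag he] at key
  simpa [Pi.single_apply, hj, hj₀.symm] using key

end IsWeak2LocalDerivation

/-- Given a weak-2-local derivation `Δ` on `Mₙ(ℂ)` and mutually orthogonal minimal projections
`p_k = e k k` with associated matrix units `e i j`, there is `w₀ ∈ Mₙ(ℂ)` with
`Δ(∑ λ_k p_k) = [w₀, ∑ λ_k p_k]` for all scalars `λ`, and `Δ(e_{1j}) = [w₀, e_{1j}]` for `j ≠ 1`. -/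
theorem exists_w0_weak2local (hn : 0 < n)
    (Δ : Matrix (Fin n) (Fin n) ℂ → Matrix (Fin n) (Fin n) ℂ)
    (hΔ : IsWeak2LocalDerivation Δ)
    (e : Fin n → Fin n → Matrix (Fin n) (Fin n) ℂ) (he : IsMatrixUnitSystem e) :
    ∃ w₀ : Matrix (Fin n) (Fin n) ℂ,
      (∀ lam : Fin n → ℂ,
        Δ (∑ k, lam k • e k k) =
          w₀ * (∑ k, lam k • e k k) - (∑ k, lam k • e k k) * w₀) ∧
      ∀ j : Fin n, j ≠ ⟨0, hn⟩ →
        Δ (e ⟨0, hn⟩ j) = w₀ * e ⟨0, hn⟩ j - e ⟨0, hn⟩ j * w₀ := by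
  set o : Fin n := ⟨0, hn⟩
  obtain ⟨w₀, hw₀⟩ := he.exists_coord_eq fun i j =>
    if i ≠ j then diagCoeff Δ e i j
    else if i = o then 0 else -matrixUnitCoord e o i (Δ (e o i))
  refine ⟨w₀, fun lam => he.ext_coord fun i j => ?_, fun j₀ hj₀ => he.ext_coord fun i j => ?_⟩
  · rw [hΔ.coord_apply_diag he, he.coord_commutator_diag, hw₀]
    rcases eq_or_ne i j with rfl | hij
    · simp
    · simp [hij]
  · rw [he.coord_commutator_unit, hw₀, hw₀]
    rcases eq_or_ne i o with rfl | hi <;> rcases eq_or_ne j j₀ with rfl | hj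
    · simp [hj₀]
    · simp [hΔ.coord_apply_unit_row he hj hj₀, hj, hj.symm]
    · simp [hΔ.coord_apply_unit_col he hi hj₀, hi]
    · simp [hΔ.coord_apply_unit_of_ne he hi hj, hi, hj]
end

section
/- Every (not necessarily linear) symmetric weak-2-local derivation Δ on M_n(ℂ) (i.e., satisfying Δ(a*)* = Δ(a) for all a) is a linear *-derivation. -/
open Matrix

variable {n : ℕ}

/-!
Testing the weak-2-local condition against the functionals `x ↦ tr (x c)`, and using that
derivations of `Mₙ` are inner (so that `tr (D a * c) = 0` when `a` and `c` commute), gives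
`tr (Δ a * c) = tr (Δ b * c)` whenever `a - b` commutes with `c`. Hence `Δ` is homogeneous and the
form `tr (Δ a * c)` vanishes on commuting pairs; applied to `a + c` this makes the form skew,
which in turn makes `Δ` additive. A linear map whose trace form vanishes on commuting pairs is
inner: its values on matrix units determine the off-diagonal entries of the implementing matrix,
and its diagonal up to a coboundary, the cocycle identity coming from a 3-cycle `a` commuting
with `a²`.
-/

namespace Matrix

variable {ι R : Type*} [Fintype ι] [CommRing R]

theorem trace_commutator_mul_eq_zero (w : Matrix ι ι R) {x c : Matrix ι ι R} (h : Commute x c) :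
    trace ((w * x - x * w) * c) = 0 := by
  rw [sub_mul, trace_sub, mul_assoc, mul_assoc, trace_mul_comm x, mul_assoc, ← h.eq, sub_self]

def TraceVanishesOnCommuting (L : Matrix ι ι R → Matrix ι ι R) : Prop :=
  ∀ a c, Commute a c → trace (L a * c) = 0

variable [DecidableEq ι]

@[simp]
theorem trace_mul_single_one (x : Matrix ι ι R) (i j : ι) : trace (x * single i j 1) = x j i := by
  simp [trace_mul_single]

theorem apply_eq_mul_sub_mul_of_forall_single {L : Matrix ι ι R →ₗ[R] Matrix ι ι R}
    (w : Matrix ι ι R) (h : ∀ i j, L (single i j 1) = w * single i j 1 - single i j 1 * w)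
    (x : Matrix ι ι R) : L x = w * x - x * w := by
  have : L = LinearMap.mulLeft R w - LinearMap.mulRight R w :=
    (stdBasis R ι ι).ext fun ⟨i, j⟩ => by
      simpa only [stdBasis_eq_single, LinearMap.sub_apply, LinearMap.mulLeft_apply,
        LinearMap.mulRight_apply] using h i j
  rw [this]
  rfl

theorem exists_eq_mul_sub_mul_of_map_mul (D : Matrix ι ι R →ₗ[R] Matrix ι ι R)
    (hD : ∀ x y, D (x * y) = D x * y + x * D y) : ∃ w, ∀ x, D x = w * x - x * w := by
  cases isEmpty_or_nonempty ι
  · exact ⟨0, fun _ => Subsingleton.elim _ _⟩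
  obtain ⟨i₀⟩ := ‹Nonempty ι›
  let w := ∑ i, D (single i i₀ 1) * single i₀ i 1
  let w' := ∑ i, single i i₀ 1 * D (single i₀ i 1)
  -- `w + w' = D 1 = 0`, and `w`, `-w'` supply the two halves of
  -- `D eⱼₖ = D eⱼᵢ₀ * eᵢ₀ₖ + eⱼᵢ₀ * D eᵢ₀ₖ`.
  have hw' : w' = -w := by
    have hD1 : D 1 = 0 := by simpa using hD 1 1
    rw [eq_neg_iff_add_eq_zero, add_comm, ← Finset.sum_add_distrib, ← hD1, ← sum_single_one,
      map_sum]
    simp only [← hD, single_mul_single_same, mul_one]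
  have hw_mul (j k : ι) : w * single j k 1 = D (single j i₀ 1) * single i₀ k 1 := by
    rw [Finset.sum_mul, Finset.sum_eq_single j (fun i _ hij => by simp [mul_assoc, hij]) (by simp)]
    simp [mul_assoc]
  have hmul_w' (j k : ι) : single j k 1 * w' = single j i₀ 1 * D (single i₀ k 1) := by
    rw [Finset.mul_sum, Finset.sum_eq_single k (fun i _ hik => by simp [← mul_assoc, Ne.symm hik])
      (by simp)]
    simp [← mul_assoc]
  refine ⟨w, apply_eq_mul_sub_mul_of_forall_single w fun j k => ?_⟩
  simp [sub_eq_add_neg, ← mul_neg, ← hw', hw_mul, hmul_w', ← hD]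

theorem traceVanishesOnCommuting_of_map_mul (D : Matrix ι ι R →ₗ[R] Matrix ι ι R)
    (hD : ∀ x y, D (x * y) = D x * y + x * D y) : TraceVanishesOnCommuting D := fun x c h => by
  obtain ⟨w, hw⟩ := exists_eq_mul_sub_mul_of_map_mul D hD
  rw [hw]
  exact trace_commutator_mul_eq_zero w h

namespace TraceVanishesOnCommuting

theorem apply_single_eq_zero {L : Matrix ι ι R → Matrix ι ι R} (hL : TraceVanishesOnCommuting L)
    {i j p q : ι} (hp : p ≠ i) (hq : q ≠ j) : L (single i j 1) p q = 0 := by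
  simpa using hL _ _ (by simp [Commute, SemiconjBy, hp, Ne.symm hq] :
    Commute (single i j (1 : R)) (single q p 1))

variable {L : Matrix ι ι R →ₗ[R] Matrix ι ι R}

theorem trace_mul_eq_neg (hL : TraceVanishesOnCommuting L) (a c : Matrix ι ι R) :
    trace (L a * c) = -trace (L c * a) := by
  have h := hL (a + c) (a + c) (.refl _)
  rw [map_add, add_mul, mul_add, mul_add, trace_add, trace_add, trace_add, hL a a (.refl a),
    hL c c (.refl c)] at h
  linear_combination h

theorem apply_single_eq_neg (hL : TraceVanishesOnCommuting L) (i j p q : ι) :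
    L (single i j 1) p q = -L (single q p 1) j i := by
  simpa using hL.trace_mul_eq_neg (single i j 1) (single q p 1)

theorem apply_single_col (hL : TraceVanishesOnCommuting L) {i j p : ι} (hp : p ≠ i) :
    L (single i j 1) p j = L (single i p 1) p p := by
  rcases eq_or_ne j p with rfl | hj
  · rfl
  have h := hL (single i j 1 + single i p 1) (single j p 1 - single p p 1)
    (by simp [Commute, SemiconjBy, add_mul, mul_add, sub_mul, mul_sub, hp, hj, Ne.symm hj])
  simp only [map_add, add_mul, mul_sub, trace_add, trace_sub, trace_mul_single_one,
    hL.apply_single_eq_zero hp (Ne.symm hj), hL.apply_single_eq_zero hp hj] at h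
  linear_combination h

theorem cocycle (hL : TraceVanishesOnCommuting L) (i j k : ι) :
    L (single i j 1) i j + L (single j k 1) j k + L (single k i 1) k i = 0 := by
  have hdiag (i : ι) : L (single i i 1) i i = 0 := by simpa using hL _ _ (.refl (single i i 1))
  have hanti (i j : ι) : L (single j i 1) j i = -L (single i j 1) i j := by
    rw [hL.apply_single_eq_neg i j i j, neg_neg]
  rcases eq_or_ne i j with rfl | hij
  · rw [hdiag, hanti i k]; ring
  rcases eq_or_ne j k with rfl | hjk
  · rw [hdiag, hanti i j]; ring
  rcases eq_or_ne k i with rfl | hki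
  · rw [hdiag, hanti k j]; ring
  set a : Matrix ι ι R := single i j 1 + single j k 1 + single k i 1
  have h := hL a (a * a) ((Commute.refl a).mul_right (.refl a))
  simp [a, add_mul, mul_add, hij, hjk, hki, Ne.symm hij, Ne.symm hjk, Ne.symm hki,
    hL.apply_single_eq_zero] at h
  linear_combination h

theorem exists_eq_mul_sub_mul (hL : TraceVanishesOnCommuting L) :
    ∃ w, ∀ x, L x = w * x - x * w := by
  cases isEmpty_or_nonempty ι
  · exact ⟨0, fun _ => Subsingleton.elim _ _⟩
  obtain ⟨i₀⟩ := ‹Nonempty ι›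
  -- the `(i, j)` entry of `w * eᵢⱼ - eᵢⱼ * w` is `wᵢᵢ - wⱼⱼ`, so `L eᵢⱼ i j` must be a coboundary
  let g (i j : ι) : R := L (single i j 1) i j
  have hg (i j : ι) : g i j = g i i₀ - g j i₀ := by
    have := hL.cocycle i j i₀
    rw [hL.apply_single_eq_neg i₀ i i₀ i] at this
    linear_combination this
  let w : Matrix ι ι R := of fun p q => if p = q then g p i₀ else L (single q p 1) p p
  refine ⟨w, apply_eq_mul_sub_mul_of_forall_single w fun i j => ?_⟩
  ext p q
  rcases eq_or_ne q j with rfl | hq <;> rcases eq_or_ne p i with rfl | hp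
  · simpa [w] using hg p q
  · simpa [w, hp] using hL.apply_single_col hp
  · simpa [w, hq, hq.symm, hL.apply_single_col hq.symm] using hL.apply_single_eq_neg p j p q
  · simpa [hp, hq] using hL.apply_single_eq_zero hp hq

end TraceVanishesOnCommuting

end Matrix

namespace IsWeak2LocalDerivation

variable {Δ : Matrix (Fin n) (Fin n) ℂ → Matrix (Fin n) (Fin n) ℂ}

theorem exists_derivation_trace_mul_eq (hΔ : IsWeak2LocalDerivation Δ)
    (a b c : Matrix (Fin n) (Fin n) ℂ) :
    ∃ D : Matrix (Fin n) (Fin n) ℂ →ₗ[ℂ] Matrix (Fin n) (Fin n) ℂ, IsMatrixDerivation D ∧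
      trace (Δ a * c) = trace (D a * c) ∧ trace (Δ b * c) = trace (D b * c) :=
  hΔ a b ((traceLinearMap _ ℂ ℂ).comp (LinearMap.mulRight ℂ c))

theorem traceVanishesOnCommuting (hΔ : IsWeak2LocalDerivation Δ) : TraceVanishesOnCommuting Δ :=
  fun a c h => by
    obtain ⟨D, hD, ha, -⟩ := hΔ.exists_derivation_trace_mul_eq a a c
    rw [ha]
    exact traceVanishesOnCommuting_of_map_mul D hD a c h

theorem trace_mul_eq_of_commute_sub (hΔ : IsWeak2LocalDerivation Δ)
    {a b c : Matrix (Fin n) (Fin n) ℂ} (h : Commute (a - b) c) :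
    trace (Δ a * c) = trace (Δ b * c) := by
  obtain ⟨D, hD, ha, hb⟩ := hΔ.exists_derivation_trace_mul_eq a b c
  rw [ha, hb, ← sub_eq_zero, ← trace_sub, ← sub_mul, ← map_sub]
  exact traceVanishesOnCommuting_of_map_mul D hD _ _ h

theorem map_smul (hΔ : IsWeak2LocalDerivation Δ) (r : ℂ) (a : Matrix (Fin n) (Fin n) ℂ) :
    Δ (r • a) = r • Δ a := by
  refine ext_iff_trace_mul_right.2 fun c => ?_
  obtain ⟨D, -, hra, ha⟩ := hΔ.exists_derivation_trace_mul_eq (r • a) a c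
  rw [hra, D.map_smul, smul_mul_assoc, trace_smul, ← ha, smul_mul_assoc, trace_smul]

theorem trace_mul_eq_neg (hΔ : IsWeak2LocalDerivation Δ) (x y : Matrix (Fin n) (Fin n) ℂ) :
    trace (Δ x * y) = -trace (Δ y * x) := by
  have h := hΔ.traceVanishesOnCommuting (x + y) (x + y) (.refl _)
  rw [mul_add, trace_add, hΔ.trace_mul_eq_of_commute_sub (a := x + y) (b := y) (by simp),
    hΔ.trace_mul_eq_of_commute_sub (a := x + y) (b := x) (by simp)] at h
  linear_combination h

theorem map_add (hΔ : IsWeak2LocalDerivation Δ) (x y : Matrix (Fin n) (Fin n) ℂ) :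
    Δ (x + y) = Δ x + Δ y :=
  ext_iff_trace_mul_right.2 fun c => by
    rw [add_mul, trace_add, hΔ.trace_mul_eq_neg, hΔ.trace_mul_eq_neg x, hΔ.trace_mul_eq_neg y,
      mul_add, trace_add, neg_add]

theorem isLinearMap (hΔ : IsWeak2LocalDerivation Δ) : IsLinearMap ℂ Δ :=
  ⟨hΔ.map_add, hΔ.map_smul⟩

theorem exists_eq_mul_sub_mul (hΔ : IsWeak2LocalDerivation Δ) :
    ∃ w, ∀ x, Δ x = w * x - x * w :=
  TraceVanishesOnCommuting.exists_eq_mul_sub_mul (L := IsLinearMap.mk' Δ hΔ.isLinearMap)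
    hΔ.traceVanishesOnCommuting

end IsWeak2LocalDerivation

/-- Every symmetric (i.e. `Δ(a*)* = Δ(a)`) weak-2-local derivation on `Mₙ(ℂ)` is a linear
`*`-derivation. -/
theorem symmetric_weak2local_derivation_is_linear_star_derivation
    (Δ : Matrix (Fin n) (Fin n) ℂ → Matrix (Fin n) (Fin n) ℂ)
    (hΔ : IsWeak2LocalDerivation Δ) (hsym : ∀ a, star (Δ (star a)) = Δ a) :
    IsLinearMap ℂ Δ ∧ (∀ x y, Δ (x * y) = Δ x * y + x * Δ y) ∧
      ∀ a, Δ (star a) = star (Δ a) := by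
  obtain ⟨w, hw⟩ := hΔ.exists_eq_mul_sub_mul
  refine ⟨hΔ.isLinearMap, fun x y => ?_, fun a => by rw [← hsym a, star_star]⟩
  simp only [hw]
  noncomm_ring
end
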